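/- Define c_0 = b_0 − b_1, c_1 = b_{n−1} − b_0, and c_i = b_{n−i} − b_{n+1−i} for 2 ≤ i ≤ n−1; each c_i is rational. Let L be the least positive integer such that L·c_i ∈ ℤ for all i, and set T = ∑_{i=0}^{n−1} (L·c_i)·α^{2i} ∈ ℤ. Then N := (p / gcd(p,T))·L is the least positive integer for which there exist integers e_0,…,e_{n−1} satisfying: p divides ∑_{i=0}^{n−1} e_i·α^{2i}, and for every 0 ≤ i ≤ n−1, ∑_{j=0}^{n−1} e_j·a_{(i+j) mod n} = N if i = 0, −N if i = n−1, and 0 otherwise. (This N is the order of the class of P_0 − P_{n−1} in the rational cuspidal group of X₁(p).) -/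

import Mathlib

noncomputable section

open Complex Filter Matrix

namespace SiegelPaper

/-- The second Bernoulli polynomial (complex variable). -/
def B2 (x : ℂ) : ℂ := x ^ 2 - x + 1 / 6

/-- The second Bernoulli polynomial (real variable). -/
def B2R (x : ℝ) : ℝ := x ^ 2 - x + 1 / 6

/-- The Siegel function `g_a(τ)` attached to `a = (a₁, a₂) ∈ ℚ²`, defined (for `τ` in the
upper half-plane) by the convergent product
`g_a(τ) = −e^{πi a₂(a₁−1)} · e^{πiτ B₂(a₁)} · (1 − q_z) · ∏_{m≥1} (1 − qᵐ q_z)(1 − qᵐ q_z⁻¹)`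
where `q = e^{2πiτ}` and `q_z = e^{2πi(a₁ τ + a₂)}`. -/
def siegel (a : ℚ × ℚ) (τ : ℂ) : ℂ :=
  -Complex.exp (Real.pi * I * (a.2 : ℂ) * ((a.1 : ℂ) - 1)) *
    Complex.exp (Real.pi * I * τ * B2 (a.1 : ℂ)) *
    (1 - Complex.exp (2 * Real.pi * I * ((a.1 : ℂ) * τ + (a.2 : ℂ)))) *
    ∏' m : ℕ,
      ((1 - Complex.exp (2 * Real.pi * I * τ) ^ (m + 1) *
            Complex.exp (2 * Real.pi * I * ((a.1 : ℂ) * τ + (a.2 : ℂ)))) *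
        (1 - Complex.exp (2 * Real.pi * I * τ) ^ (m + 1) /
            Complex.exp (2 * Real.pi * I * ((a.1 : ℂ) * τ + (a.2 : ℂ)))))

/-- `a ∈ ℚ²` lies in `ℤ²`. -/
def isIntegral (a : ℚ × ℚ) : Prop := (∃ m : ℤ, a.1 = m) ∧ (∃ m : ℤ, a.2 = m)

/-- The filter `Im τ → ∞` on `ℂ`. -/
def atImInfty : Filter ℂ := Filter.comap Complex.im Filter.atTop

/-- `E_i(τ) = g_{(αⁱ/p, 0)}(τ) · ∏_{j=0}^{p−2} g_{(αⁱ/p, αʲ/p)}(τ)`. -/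
def E (p : ℕ) (α : ℤ) (i : ℕ) (τ : ℂ) : ℂ :=
  siegel ((α : ℚ) ^ i / (p : ℚ), 0) τ *
    ∏ j ∈ Finset.range (p - 1), siegel ((α : ℚ) ^ i / (p : ℚ), (α : ℚ) ^ j / (p : ℚ)) τ

/-- `F_i(τ) = g_{(0, αⁱ/p)}(τ)`. -/
def F (p : ℕ) (α : ℤ) (i : ℕ) (τ : ℂ) : ℂ :=
  siegel (0, (α : ℚ) ^ i / (p : ℚ)) τ

/-- The Möbius action of a matrix in `SL₂(ℤ)` on (the upper half-plane inside) `ℂ`. -/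
def moebius (γ : Matrix.SpecialLinearGroup (Fin 2) ℤ) (τ : ℂ) : ℂ :=
  ((γ.1 0 0 : ℂ) * τ + (γ.1 0 1 : ℂ)) / ((γ.1 1 0 : ℂ) * τ + (γ.1 1 1 : ℂ))

/-- A modular unit on `X₁(p)`: a function `f : ℍ → ℂ` which is holomorphic and nowhere
vanishing on the upper half-plane, invariant under `Γ₁(p)`, and meromorphic at the cusps. -/
structure IsModularUnit (p : ℕ) (f : ℂ → ℂ) : Prop where
  holo : ∀ τ : ℂ, 0 < τ.im → DifferentiableAt ℂ f τ
  ne_zero : ∀ τ : ℂ, 0 < τ.im → f τ ≠ 0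
  invariant : ∀ γ ∈ CongruenceSubgroup.Gamma1 p, ∀ τ : ℂ, 0 < τ.im → f (moebius γ τ) = f τ
  merom_at_cusps : ∀ γ : Matrix.SpecialLinearGroup (Fin 2) ℤ, ∃ m : ℤ, ∃ L : ℂ, L ≠ 0 ∧
    Filter.Tendsto (fun τ : ℂ => f (moebius γ τ) *
        Complex.exp (-(2 * Real.pi * I * (m : ℂ) * τ) / (p : ℂ)))
      atImInfty (nhds L)

/-- `f` has order `r` at the cusp `P_i` (represented by `αⁱ/p`, of width 1):
for any `γ ∈ SL₂(ℤ)` with first column `(αⁱ, p)ᵀ`, `f(γ·τ)·e^{−2πi r τ}` tends to a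
nonzero limit as `Im τ → ∞`. -/
def HasOrderAtP (p : ℕ) (α : ℤ) (i : ℕ) (f : ℂ → ℂ) (r : ℝ) : Prop :=
  ∀ γ : Matrix.SpecialLinearGroup (Fin 2) ℤ, γ.1 0 0 = α ^ i → γ.1 1 0 = (p : ℤ) →
    ∃ L : ℂ, L ≠ 0 ∧ Filter.Tendsto
      (fun τ : ℂ => f (moebius γ τ) * Complex.exp (-(2 * Real.pi * I * (r : ℂ) * τ)))
      atImInfty (nhds L)

/-- `f` has order `r` at the cusp `Q_i` (represented by `p/αⁱ`, of width `p`):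
for any `γ ∈ SL₂(ℤ)` with first column `(p, αⁱ)ᵀ`, `f(γ·τ)·e^{−2πi r τ/p}` tends to a
nonzero limit as `Im τ → ∞`. -/
def HasOrderAtQ (p : ℕ) (α : ℤ) (i : ℕ) (f : ℂ → ℂ) (r : ℝ) : Prop :=
  ∀ γ : Matrix.SpecialLinearGroup (Fin 2) ℤ, γ.1 0 0 = (p : ℤ) → γ.1 1 0 = α ^ i →
    ∃ L : ℂ, L ≠ 0 ∧ Filter.Tendsto
      (fun τ : ℂ => f (moebius γ τ) * Complex.exp (-(2 * Real.pi * I * (r : ℂ) * τ) / (p : ℂ)))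
      atImInfty (nhds L)

/-- The matrix `γ_k = [[1, α^k],[0,1]] ∈ SL₂(ℤ)`. -/
def gammaMat (α : ℤ) (k : ℕ) : Matrix.SpecialLinearGroup (Fin 2) ℤ :=
  ⟨!![1, α ^ k; 0, 1], by simp [Matrix.det_fin_two_of]⟩

/-- `G_i = E_i · E_{n−1}^{−α^{2i+2}} · F_{n−1}^{p(α^{2i+2}−1)}` for `0 ≤ i ≤ n−2`, and
`G_{n−1} = E_{n−1}^p · F_{n−1}^{−βp}`. -/
def G (p n : ℕ) (α β : ℤ) (i : ℕ) (τ : ℂ) : ℂ :=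
  if i = n - 1 then E p α (n - 1) τ ^ (p : ℤ) * F p α (n - 1) τ ^ (-(β * (p : ℤ)))
  else
    E p α i τ * E p α (n - 1) τ ^ (-(α ^ (2 * i + 2))) *
      F p α (n - 1) τ ^ ((p : ℤ) * (α ^ (2 * i + 2) - 1))

/-- `H_i = F_i · F_{n−1}^{−α^{2i+2}+pβ(α^{2i+2}−1)}` for `0 ≤ i ≤ n−2`, and
`H_{n−1} = F_{n−1}^{12p}`. -/
def H (p n : ℕ) (α β : ℤ) (i : ℕ) (τ : ℂ) : ℂ :=
  if i = n - 1 then F p α (n - 1) τ ^ (12 * (p : ℤ))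
  else F p α i τ * F p α (n - 1) τ ^ (-(α ^ (2 * i + 2)) + (p : ℤ) * β * (α ^ (2 * i + 2) - 1))

/-- `I_i = E_{i−1} · E_i^{−γ²−1} · E_{i+1}^{γ²}` for `1 ≤ i ≤ n−2` (with `γ = α^{p−2}`), and
`I_{n−1} = (E_{n−2}·E_{n−1}⁻¹)^p`. -/
def Ifun (p n : ℕ) (α : ℤ) (i : ℕ) (τ : ℂ) : ℂ :=
  if i = n - 1 then (E p α (n - 2) τ * (E p α (n - 1) τ)⁻¹) ^ (p : ℤ)
  else
    E p α (i - 1) τ * E p α i τ ^ (-((α ^ (p - 2)) ^ 2) - 1) *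
      E p α (i + 1) τ ^ ((α ^ (p - 2)) ^ 2)

/-- `a_t = (p/2)·B₂({αᵗ/p})`, as a complex number. -/
def aC (p : ℕ) (α : ℤ) (t : ℕ) : ℂ :=
  ((p : ℂ) / 2) * B2 ((Int.fract ((α : ℝ) ^ t / (p : ℝ)) : ℝ) : ℂ)

/-- `y_s = ∑_{t<n} ω^{st}·a_t` (so `4·y_s = B_{2,χ_s}`). -/
def yC (p n : ℕ) (α : ℤ) (ω : ℂ) (s : ℕ) : ℂ :=
  ∑ t ∈ Finset.range n, ω ^ (s * t) * aC p α t

/-- `b_j = (1/n)·∑_{s<n} ω^{−js}·y_s⁻¹`. -/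
def bC (p n : ℕ) (α : ℤ) (ω : ℂ) (j : ℕ) : ℂ :=
  (1 / (n : ℂ)) * ∑ s ∈ Finset.range n, ω ^ (-(j * s : ℤ)) * (yC p n α ω s)⁻¹

/-- `c_0 = b_0 − b_1`, `c_1 = b_{n−1} − b_0`, `c_i = b_{n−i} − b_{n+1−i}` for `2 ≤ i ≤ n−1`. -/
def cC (p n : ℕ) (α : ℤ) (ω : ℂ) (i : ℕ) : ℂ :=
  if i = 0 then bC p n α ω 0 - bC p n α ω 1
  else if i = 1 then bC p n α ω (n - 1) - bC p n α ω 0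
  else bC p n α ω (n - i) - bC p n α ω (n + 1 - i)

/-- The generalized Bernoulli number `B_{2,χ} = p·∑_{a=1}^{p−1} χ(a)·B₂(a/p)`. -/
def B2chi (p : ℕ) (χ : DirichletCharacter ℂ p) : ℂ :=
  (p : ℂ) * ∑ a ∈ Finset.Icc 1 (p - 1), χ (a : ZMod p) * B2 ((a : ℂ) / (p : ℂ))


/-!
Over `ℤ/n`, the discrete Fourier transform with respect to `ω` turns convolution with `a` into
multiplication by `y_s`. Each `y_s` is `-1/2 · L(-1, χ)` for the even Dirichlet character `χ`
mod `p` with `χ(α) = ω^s`, and these values do not vanish: for `χ = 1` it is `(1 - p) ζ(-1)`,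
otherwise the functional equation relates it to `L(2, χ⁻¹) ≠ 0` and a nonzero Gauss sum.
Hence `b` is the convolution inverse of `a`, the Hankel matrix `A = (a_{i+j})` is invertible,
and `c_j = b_{-j} - b_{1-j}` is the unique solution of `A c = δ_0 - δ_{-1}`; as `A` is rational,
so is `c`. The integral solutions with right-hand side `N (δ_0 - δ_{-1})` are therefore exactly
`e = N c`, so `L ∣ N`, and writing `N = m L` the congruence condition becomes `p ∣ m T`, whose
least positive solution is `m = p / gcd(p, T)`.
-/

open Finset

section Convolution

variable {K : Type*} [Field K] {n : ℕ} [NeZero n]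

def dft (ψ : AddChar (ZMod n) K) (a : ZMod n → K) (s : ZMod n) : K :=
  ∑ t, ψ (s * t) * a t

def convInv (ψ : AddChar (ZMod n) K) (a : ZMod n → K) (j : ZMod n) : K :=
  (n : K)⁻¹ * ∑ s, ψ (-(j * s)) * (dft ψ a s)⁻¹

def hankel {R : Type*} (a : ZMod n → R) : Matrix (ZMod n) (ZMod n) R :=
  Matrix.of fun i j => a (i + j)

variable [NeZero (n : K)] {ψ : AddChar (ZMod n) K} (hψ : ψ.IsPrimitive)
  {a : ZMod n → K} (ha : ∀ s, dft ψ a s ≠ 0)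
include hψ ha

theorem sum_mul_convInv (i k : ZMod n) :
    ∑ j, a (i + j) * convInv ψ a (k - j) = if i + k = 0 then 1 else 0 := by
  have inner (s : ZMod n) : ∑ j, a (i + j) * ψ (-((k - j) * s))
      = dft ψ a s * ψ (s * -(i + k)) := by
    rw [dft, sum_mul,
      ← Equiv.sum_comp (Equiv.addLeft i) (fun t => ψ (s * t) * a t * ψ (s * -(i + k)))]
    refine sum_congr rfl fun j _ => ?_
    rw [Equiv.coe_addLeft, mul_comm (ψ _), mul_assoc, ← AddChar.map_add_eq_mul]
    ring_nf
  calc ∑ j, a (i + j) * convInv ψ a (k - j)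
      = (n : K)⁻¹ * ∑ s, (dft ψ a s)⁻¹ * ∑ j, a (i + j) * ψ (-((k - j) * s)) := by
        simp only [convInv, mul_sum]
        rw [sum_comm]
        refine sum_congr rfl fun j _ => sum_congr rfl fun s _ => by ring
    _ = (n : K)⁻¹ * ∑ s, ψ (s * -(i + k)) := by
        simp only [inner, inv_mul_cancel_left₀ (ha _)]
    _ = if i + k = 0 then 1 else 0 := by
        simp only [AddChar.sum_mulShift _ hψ, neg_eq_zero, ZMod.card]
        split_ifs
        · exact inv_mul_cancel₀ (NeZero.ne _)
        · simp

theorem hankel_mul_convInv :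
    hankel a * Matrix.of (fun j k => convInv ψ a (-k - j)) = 1 := by
  ext i k
  simp only [hankel, Matrix.mul_apply, Matrix.of_apply, sum_mul_convInv hψ ha, Matrix.one_apply,
    ← sub_eq_add_neg, sub_eq_zero]

theorem isUnit_hankel : IsUnit (hankel a) :=
  (Matrix.isUnit_iff_isUnit_det _).mpr
    (Matrix.isUnit_det_of_right_inverse (hankel_mul_convInv hψ ha))

theorem hankel_mulVec_convInv_sub :
    (hankel a).mulVec (fun j => convInv ψ a (-j) - convInv ψ a (1 - j)) =
      Pi.single 0 1 - Pi.single (-1) 1 := by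
  ext i
  have h₀ := sum_mul_convInv hψ ha i 0
  have h₁ := sum_mul_convInv hψ ha i 1
  simp only [zero_sub, add_zero] at h₀
  simp only [Matrix.mulVec, dotProduct, hankel, Matrix.of_apply, mul_sub, sum_sub_distrib, h₀, h₁,
    add_eq_zero_iff_eq_neg, Pi.sub_apply, Pi.single_apply]

theorem hankel_mulVec_eq_smul_iff (N : K) (x : ZMod n → K) :
    (hankel a).mulVec x = N • (Pi.single 0 1 - Pi.single (-1) 1) ↔
      x = N • fun j => convInv ψ a (-j) - convInv ψ a (1 - j) := by
  rw [← hankel_mulVec_convInv_sub hψ ha, ← Matrix.mulVec_smul]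
  exact (Matrix.mulVec_injective_iff_isUnit.mpr (isUnit_hankel hψ ha)).eq_iff

end Convolution

theorem exists_ratCast_eq_of_mulVec_eq {ι K : Type*} [Fintype ι] [DecidableEq ι] [Field K]
    [CharZero K] {M : Matrix ι ι ℚ} (hM : IsUnit (M.map ((↑) : ℚ → K))) {v : ι → ℚ}
    {x : ι → K} (hx : (M.map (↑)).mulVec x = fun i => (v i : K)) :
    ∃ q : ι → ℚ, x = fun i => (q i : K) := by
  have hdet : IsUnit M.det := by
    rw [Matrix.isUnit_iff_isUnit_det] at hM
    have h := (Rat.castHom K).map_det M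
    rw [RingHom.mapMatrix_apply, Rat.coe_castHom] at h
    rw [← h, isUnit_iff_ne_zero, Rat.cast_ne_zero] at hM
    exact isUnit_iff_ne_zero.mpr hM
  refine ⟨M⁻¹.mulVec v, Matrix.mulVec_injective_iff_isUnit.mpr hM (hx.trans ?_)⟩
  ext i
  have h := (Rat.castHom K).map_mulVec M (M⁻¹.mulVec v) i
  rw [Matrix.mulVec_mulVec, Matrix.mul_nonsing_inv _ hdet, Matrix.one_mulVec] at h
  exact h

section LFunction

open DirichletCharacter

lemma B2_one_sub (x : ℂ) : B2 (1 - x) = B2 x := by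
  simp only [B2]; ring

lemma eval_map_bernoulli_two (x : ℂ) :
    ((Polynomial.bernoulli 2).map (algebraMap ℚ ℂ)).eval x = B2 x := by
  simp only [B2, Polynomial.bernoulli, sum_range_succ, range_zero, sum_empty, zero_add,
    Polynomial.map_add, Polynomial.map_monomial, Polynomial.eval_add, Polynomial.eval_monomial]
  norm_num [bernoulli_two, sub_eq_add_neg]

lemma hurwitzZeta_neg_one {x : ℝ} (hx : x ∈ Set.Icc 0 1) :
    HurwitzZeta.hurwitzZeta x (-1) = -(1 / 2) * B2 x := by
  have h := HurwitzZeta.hurwitzZeta_neg_nat one_ne_zero hx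
  rw [Nat.cast_one] at h
  rw [h, eval_map_bernoulli_two]
  norm_num

lemma LFunction_neg_one_eq {N : ℕ} [NeZero N] (Φ : ZMod N → ℂ) :
    ZMod.LFunction Φ (-1) = -(N / 2) * ∑ x : ZMod N, Φ x * B2 (x.val / N) := by
  have hN : (0 : ℝ) < N := Nat.cast_pos.mpr (NeZero.pos N)
  have hterm (x : ZMod N) : HurwitzZeta.hurwitzZeta (ZMod.toAddCircle x) (-1) =
      -(1 / 2) * B2 (x.val / N) := by
    rw [ZMod.toAddCircle_apply, hurwitzZeta_neg_one ⟨by positivity,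
      (div_le_one hN).mpr (by exact_mod_cast x.val_lt.le)⟩]
    push_cast; rfl
  simp only [ZMod.LFunction, neg_neg, cpow_one, hterm, mul_sum]
  exact sum_congr rfl fun x _ => by ring

lemma LFunctionTrivChar_neg_one_ne_zero (N : ℕ) [NeZero N] :
    LFunctionTrivChar N (-1) ≠ 0 := by
  have hζ : riemannZeta (-1) = -1 / 12 := by
    have := riemannZeta_neg_nat_eq_bernoulli 1
    rw [bernoulli_two] at this
    push_cast at this
    rw [this]; norm_num
  rw [LFunctionTrivChar_eq_mul_riemannZeta (by norm_num), hζ, neg_neg]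
  refine mul_ne_zero (prod_ne_zero_iff.mpr fun q hq => ?_) (by norm_num)
  rw [cpow_one, sub_ne_zero]
  exact_mod_cast (Nat.prime_of_mem_primeFactors hq).one_lt.ne

lemma LFunction_dft_eq_gaussSum_mul {p : ℕ} [Fact p.Prime] {χ : DirichletCharacter ℂ p}
    (hprim : χ.IsPrimitive) (heven : χ.Even) (s : ℂ) :
    ZMod.LFunction (ZMod.dft χ) s = gaussSum χ ZMod.stdAddChar * χ⁻¹.LFunction s := by
  have hinv : (χ⁻¹).Even := by
    show χ⁻¹ (-1) = 1
    rw [MulChar.inv_apply', inv_neg_one, heven]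
  have hdft : ZMod.dft χ = fun k => gaussSum χ ZMod.stdAddChar * χ⁻¹ k := funext fun k => by
    rw [hprim.fourierTransform_eq_inv_mul_gaussSum, hinv.to_fun, mul_comm]
  simp only [hdft, DirichletCharacter.LFunction, ZMod.LFunction, mul_sum]
  exact sum_congr rfl fun x _ => by ring

lemma LFunction_neg_one_ne_zero_of_ne_one {p : ℕ} [Fact p.Prime] {χ : DirichletCharacter ℂ p}
    (hχ : χ ≠ 1) (heven : χ.Even) : χ.LFunction (-1) ≠ 0 := by
  have hprim : χ.IsPrimitive :=
    ((Fact.out : p.Prime).eq_one_or_self_of_dvd _ χ.conductor_dvd_level).resolve_left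
      fun h => hχ (eq_one_iff_conductor_eq_one.mpr h)
  have hp1 : p ≠ 1 := (Fact.out : p.Prime).ne_one
  have hfe := ZMod.LFunction_one_sub (⇑χ) (s := 2)
    (fun k h => by
      have h' := congrArg re h
      simp only [re_ofNat, neg_re, natCast_re] at h'
      linarith [(k.cast_nonneg : (0 : ℝ) ≤ k)])
    (.inl (χ.map_zero' hp1))
  have hG : gaussSum χ ZMod.stdAddChar ≠ 0 :=
    gaussSum_ne_zero_of_nontrivial (by simp [(Fact.out : p.Prime).ne_zero]) hχ
      (ZMod.isPrimitive_stdAddChar p)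
  have hL2 : χ⁻¹.LFunction 2 ≠ 0 :=
    LFunction_ne_zero_of_one_le_re _ (.inl (inv_ne_one.mpr hχ)) (by norm_num)
  have hexp : cexp (Real.pi * I * 2 / 2) = -1 := by
    rw [show (Real.pi : ℂ) * I * 2 / 2 = Real.pi * I by ring, exp_pi_mul_I]
  have hexp' : cexp (-Real.pi * I * 2 / 2) = -1 := by
    rw [show -(Real.pi : ℂ) * I * 2 / 2 = -(Real.pi * I) by ring, exp_neg, exp_pi_mul_I,
      inv_neg_one]
  have hΓ : Gamma 2 = 1 := by
    rw [show (2 : ℂ) = (1 : ℕ) + 1 by norm_num, Gamma_nat_eq_factorial]; simp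
  -- the functional equation at `s = 2` reads `L(χ, -1) = -2 p (2π)⁻² τ(χ) L(χ⁻¹, 2)`
  rw [show (1 : ℂ) - 2 = -1 by norm_num, funext heven.to_fun, hexp, hexp', hΓ,
    LFunction_dft_eq_gaussSum_mul hprim heven] at hfe
  rw [DirichletCharacter.LFunction, hfe]
  simp [hG, hL2, cpow_eq_zero_iff, Real.pi_ne_zero, (Fact.out : p.Prime).ne_zero]

lemma LFunction_neg_one_ne_zero_of_even {p : ℕ} [Fact p.Prime] {χ : DirichletCharacter ℂ p}
    (hχ : χ.Even) : χ.LFunction (-1) ≠ 0 := by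
  rcases eq_or_ne χ 1 with rfl | h
  · exact LFunctionTrivChar_neg_one_ne_zero p
  · exact LFunction_neg_one_ne_zero_of_ne_one h hχ

end LFunction

section PrimitiveRoot

lemma _root_.IsPrimitiveRoot.pow_eq_neg_one {R : Type*} [CommRing R] [IsDomain R] {g : R} {n : ℕ}
    (hg : IsPrimitiveRoot g (2 * n)) (hn : n ≠ 0) : g ^ n = -1 := by
  have h := hg.pow_of_dvd hn (dvd_mul_left n 2)
  rw [Nat.mul_div_cancel _ (Nat.pos_of_ne_zero hn)] at h
  exact h.eq_neg_one_of_two_right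

variable {F : Type*} [Field F] [Fintype F] [DecidableEq F] {g : F}
  (hg : IsPrimitiveRoot g (Fintype.card F - 1))
include hg

lemma sum_eq_add_sum_pow {M : Type*} [AddCommMonoid M] (f : F → M) :
    ∑ x, f x = f 0 + ∑ k ∈ range (Fintype.card F - 1), f (g ^ k) := by
  have hq : Fintype.card F - 1 ≠ 0 := by have := Fintype.one_lt_card (α := F); omega
  have : NeZero (Fintype.card F - 1) := ⟨hq⟩
  rw [← add_sum_erase _ f (mem_univ 0)]
  congr 1
  symm
  refine sum_nbij (g ^ ·) (fun k _ => mem_erase.mpr ⟨pow_ne_zero _ (hg.ne_zero hq), mem_univ _⟩)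
    (fun k hk l hl h => hg.pow_inj (mem_range.mp hk) (mem_range.mp hl) h) (fun x hx => ?_)
    (fun _ _ => rfl)
  obtain ⟨k, hk, rfl⟩ := hg.eq_pow_of_pow_eq_one
    (FiniteField.pow_card_sub_one_eq_one x (mem_erase.mp hx).1)
  exact ⟨k, mem_range.mpr hk, rfl⟩

lemma exists_mulChar_apply_pow {ξ : ℂ} (hξ : ξ ^ (Fintype.card F - 1) = 1) :
    ∃ χ : MulChar F ℂ, ∀ k, χ (g ^ k) = ξ ^ k := by
  have hq : Fintype.card F - 1 ≠ 0 := by have := Fintype.one_lt_card (α := F); omega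
  set u : Fˣ := (hg.isUnit hq).unit
  have hu : orderOf u = Fintype.card F - 1 := by
    rw [← orderOf_units, IsUnit.unit_spec, hg.eq_orderOf]
  have hgen : ∀ x : Fˣ, x ∈ Subgroup.zpowers u := by
    refine (Subgroup.eq_top_iff' _).mp (Subgroup.eq_top_of_card_eq _ ?_)
    rw [Nat.card_zpowers, hu, Nat.card_eq_fintype_card, Fintype.card_units]
  let ξu : ℂˣ := Units.mk0 ξ (by rintro rfl; simp [zero_pow hq] at hξ)
  have hξu : orderOf ξu ∣ orderOf u :=
    hu ▸ orderOf_dvd_of_pow_eq_one (Units.ext (by simpa [ξu] using hξ))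
  refine ⟨MulChar.ofUnitHom (monoidHomOfForallMemZpowers hgen hξu), fun k => ?_⟩
  rw [map_pow, ← IsUnit.unit_spec (hg.isUnit hq), MulChar.ofUnitHom_coe,
    monoidHomOfForallMemZpowers_apply_gen]
  rfl

end PrimitiveRoot

section Bernoulli

variable {p : ℕ}

lemma fract_intCast_div [NeZero p] (m : ℤ) :
    Int.fract ((m : ℝ) / p) = ((m : ZMod p).val : ℝ) / p := by
  rw [Int.fract_div_intCast_eq_div_intCast_mod]
  congr 1
  exact_mod_cast (ZMod.val_intCast m).symm

lemma aC_eq [NeZero p] (α : ℤ) (t : ℕ) :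
    aC p α t = p / 2 * B2 (((α : ZMod p) ^ t).val / p) := by
  have h := fract_intCast_div (p := p) (α ^ t)
  push_cast at h
  rw [aC, h]
  push_cast; rfl

lemma exists_ratCast_eq_aC [NeZero p] (α : ℤ) (t : ℕ) : ∃ q : ℚ, aC p α t = q := by
  set x : ℚ := (((α : ZMod p) ^ t).val : ℚ) / p
  exact ⟨p / 2 * (x ^ 2 - x + 1 / 6), by rw [aC_eq, B2]; push_cast [x]; ring⟩

lemma B2_val_neg_div [NeZero p] {x : ZMod p} (hx : x ≠ 0) :
    B2 ((-x).val / p) = B2 (x.val / p) := by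
  have hp : (p : ℂ) ≠ 0 := NeZero.ne _
  rw [ZMod.neg_val, if_neg hx, Nat.cast_sub x.val_lt.le, sub_div, div_self hp, B2_one_sub]

variable [Fact p.Prime] {n : ℕ} (hpn : p = 2 * n + 1) {g : ZMod p}
  (hg : IsPrimitiveRoot g (p - 1))
include hpn hg

lemma sum_mul_B2_eq {χ : DirichletCharacter ℂ p} (hχ : χ.Even) :
    ∑ x, χ x * B2 (x.val / p) = 2 * ∑ t ∈ range n, χ (g ^ t) * B2 ((g ^ t).val / p) := by
  have hp1 : p - 1 = 2 * n := by omega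
  have hn : n ≠ 0 := by have := (Fact.out : p.Prime).two_le; omega
  have hg' : IsPrimitiveRoot g (Fintype.card (ZMod p) - 1) := by rwa [ZMod.card]
  have hshift (t : ℕ) : g ^ (n + t) = -g ^ t := by
    rw [pow_add, (hp1 ▸ hg : IsPrimitiveRoot g (2 * n)).pow_eq_neg_one hn, neg_one_mul]
  rw [sum_eq_add_sum_pow hg', ZMod.card, hp1, two_mul, sum_range_add,
    χ.map_zero' (Fact.out : p.Prime).ne_one, zero_mul, zero_add, two_mul]
  congr 1
  refine sum_congr rfl fun t _ => ?_
  rw [hshift, hχ.to_fun, B2_val_neg_div (pow_ne_zero _ (hg.ne_zero (by omega)))]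

end Bernoulli

lemma yC_ne_zero {p n : ℕ} [Fact p.Prime] (hpn : p = 2 * n + 1) {α : ℤ}
    (hα : IsPrimitiveRoot (α : ZMod p) (p - 1)) {ω : ℂ} (hω : ω ^ n = 1) (s : ℕ) :
    yC p n α ω s ≠ 0 := by
  have hα' : IsPrimitiveRoot (α : ZMod p) (Fintype.card (ZMod p) - 1) := by rwa [ZMod.card]
  obtain ⟨χ, hχ⟩ : ∃ χ : DirichletCharacter ℂ p, ∀ k, χ ((α : ZMod p) ^ k) = (ω ^ s) ^ k :=
    exists_mulChar_apply_pow hα' (by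
      rw [ZMod.card, hpn, Nat.add_sub_cancel, pow_right_comm, pow_mul', hω, one_pow, one_pow])
  have heven : χ.Even := by
    have hn : n ≠ 0 := by have := (Fact.out : p.Prime).two_le; omega
    show χ (-1) = 1
    have hα2 : IsPrimitiveRoot (α : ZMod p) (2 * n) := (show p - 1 = 2 * n by omega) ▸ hα
    rw [← hα2.pow_eq_neg_one hn, hχ, pow_right_comm, hω, one_pow]
  have hL : χ.LFunction (-1) = -2 * yC p n α ω s := by
    rw [DirichletCharacter.LFunction, LFunction_neg_one_eq, sum_mul_B2_eq hpn hα heven, yC,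
      mul_sum, mul_sum, mul_sum]
    refine sum_congr rfl fun t _ => ?_
    rw [hχ, aC_eq, ← pow_mul]
    ring
  intro h
  exact LFunction_neg_one_ne_zero_of_even heven (by rw [hL, h, mul_zero])

section ZModIndexing

variable {n : ℕ} [NeZero n]

lemma sum_val_eq_sum_range {M : Type*} [AddCommMonoid M] (f : ℕ → M) :
    ∑ x : ZMod n, f x.val = ∑ i ∈ range n, f i :=
  sum_nbij' ZMod.val (↑) (fun x _ => mem_range.mpr x.val_lt) (fun _ _ => mem_univ _)
    (fun x _ => ZMod.natCast_zmod_val x) (fun _ hi => ZMod.val_cast_of_lt (mem_range.mp hi))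
    (fun _ _ => rfl)

lemma forall_lt_iff_forall_zmod {P : ℕ → Prop} : (∀ i < n, P i) ↔ ∀ x : ZMod n, P x.val :=
  ⟨fun h x => h _ x.val_lt, fun h i hi => ZMod.val_cast_of_lt hi ▸ h i⟩

lemma ite_val_eq_smul_single_sub_single [Fact (1 < n)] (N : ℂ) (x : ZMod n) :
    (if x.val = 0 then N else if x.val = n - 1 then -N else 0) =
      (N • (Pi.single 0 1 - Pi.single (-1) 1 : ZMod n → ℂ)) x := by
  have hneg : (-1 : ZMod n).val = n - 1 := by rw [ZMod.neg_val, if_neg one_ne_zero, ZMod.val_one]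
  simp only [← hneg, ZMod.val_eq_zero, (ZMod.val_injective n).eq_iff]
  rcases eq_or_ne x 0 with rfl | h0
  · simp [eq_comm (a := (0 : ZMod n)), neg_eq_zero]
  · by_cases h1 : x = -1 <;> simp [h0, h1]

variable {ω : ℂ} (hω : ω ^ n = 1)

lemma zmodChar_intCast (m : ℤ) : AddChar.zmodChar n hω m = ω ^ m := by
  rw [← zsmul_one, AddChar.map_zsmul_eq_zpow, ← Nat.cast_one, AddChar.zmodChar_apply', pow_one]

def aZMod (p : ℕ) (α : ℤ) (n : ℕ) (t : ZMod n) : ℂ := aC p α t.val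

variable (p : ℕ) (α : ℤ)

lemma dft_aZMod (s : ℕ) : dft (AddChar.zmodChar n hω) (aZMod p α n) s = yC p n α ω s := by
  rw [dft, yC, ← sum_val_eq_sum_range]
  refine sum_congr rfl fun t _ => ?_
  rw [aZMod, ← AddChar.zmodChar_apply' hω, Nat.cast_mul, ZMod.natCast_zmod_val]

lemma convInv_aZMod (j : ℕ) : convInv (AddChar.zmodChar n hω) (aZMod p α n) j = bC p n α ω j := by
  rw [convInv, bC, one_div, ← sum_val_eq_sum_range]
  refine congrArg _ (sum_congr rfl fun s _ => ?_)
  rw [← dft_aZMod, ZMod.natCast_zmod_val, ← zmodChar_intCast hω]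
  push_cast
  rw [ZMod.natCast_zmod_val]

lemma cC_val (y : ZMod n) : cC p n α ω y.val =
    convInv (AddChar.zmodChar n hω) (aZMod p α n) (-y) -
      convInv (AddChar.zmodChar n hω) (aZMod p α n) (1 - y) := by
  have hsub {j : ℕ} (hj : j ≤ n) : ((n - j : ℕ) : ZMod n) = -j := by
    rw [Nat.cast_sub hj, ZMod.natCast_self, zero_sub]
  simp only [cC, ← convInv_aZMod hω]
  split_ifs with h0 h1
  · rw [(ZMod.val_eq_zero y).mp h0]; simp
  · rw [hsub (NeZero.pos n), Nat.cast_zero, ← ZMod.natCast_zmod_val y, h1, Nat.cast_one, sub_self]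
  · have h2 : ((n + 1 - y.val : ℕ) : ZMod n) = 1 - y := by
      rw [Nat.cast_sub (by have := y.val_lt; omega), Nat.cast_add, ZMod.natCast_self,
        ZMod.natCast_zmod_val, Nat.cast_one, zero_add]
    rw [hsub y.val_lt.le, h2, ZMod.natCast_zmod_val]

end ZModIndexing

section Solutions

variable {p n : ℕ} [Fact p.Prime] (hpn : p = 2 * n + 1) {α : ℤ}
  (hα : IsPrimitiveRoot (α : ZMod p) (p - 1)) {ω : ℂ} (hω : IsPrimitiveRoot ω n)
include hpn hα hω

lemma dft_aZMod_ne_zero [NeZero n] (s : ZMod n) :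
    dft (AddChar.zmodChar n hω.pow_eq_one) (aZMod p α n) s ≠ 0 := by
  rw [← ZMod.natCast_zmod_val s, dft_aZMod]
  exact yC_ne_zero hpn hα hω.pow_eq_one _

theorem exists_ratCast_eq_cC {i : ℕ} (hi : i < n) : ∃ q : ℚ, cC p n α ω i = q := by
  have : NeZero n := ⟨by omega⟩
  have hψ := AddChar.zmodChar_primitive_of_primitive_root n hω
  have ha := dft_aZMod_ne_zero hpn hα hω
  choose aQ haQ using fun t : ZMod n => exists_ratCast_eq_aC (p := p) α t.val
  have hM : (hankel aQ).map ((↑) : ℚ → ℂ) = hankel (aZMod p α n) :=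
    Matrix.ext fun i j => (haQ (i + j)).symm
  obtain ⟨q, hq⟩ := exists_ratCast_eq_of_mulVec_eq (M := hankel aQ)
    (v := Pi.single 0 1 - Pi.single (-1) 1) (hM ▸ isUnit_hankel hψ ha)
    (hM ▸ (hankel_mulVec_convInv_sub hψ ha).trans (by
      ext
      simp only [Pi.sub_apply, Pi.single_apply, Rat.cast_sub]
      split_ifs <;> simp))
  have hc := cC_val hω.pow_eq_one p α (i : ZMod n)
  rw [ZMod.val_cast_of_lt hi] at hc
  exact ⟨q i, hc.trans (congrFun hq i)⟩

theorem sum_mul_aC_eq_iff (hn : 2 ≤ n) (e : ℕ → ℤ) (N : ℂ) :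
    (∀ i < n, ∑ j ∈ range n, (e j : ℂ) * aC p α ((i + j) % n) =
        if i = 0 then N else if i = n - 1 then -N else 0) ↔
      ∀ j < n, (e j : ℂ) = N * cC p n α ω j := by
  have : Fact (1 < n) := ⟨by omega⟩
  have hψ := AddChar.zmodChar_primitive_of_primitive_root n hω
  have hsum (x : ZMod n) : ∑ j ∈ range n, (e j : ℂ) * aC p α ((x.val + j) % n) =
      (hankel (aZMod p α n)).mulVec (fun y => (e y.val : ℂ)) x := by
    rw [← sum_val_eq_sum_range]
    simp only [Matrix.mulVec, dotProduct, hankel, Matrix.of_apply, aZMod, ZMod.val_add, mul_comm]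
  rw [forall_lt_iff_forall_zmod, forall_lt_iff_forall_zmod]
  simp only [hsum, ite_val_eq_smul_single_sub_single, cC_val hω.pow_eq_one]
  rw [← funext_iff, hankel_mulVec_eq_smul_iff hψ (dft_aZMod_ne_zero hpn hα hω), funext_iff]
  rfl

end Solutions

section Lattice

lemma dvd_mul_iff_div_gcd_dvd {p t m : ℕ} (hp : 0 < p) : p ∣ m * t ↔ p / p.gcd t ∣ m := by
  have hg : 0 < p.gcd t := Nat.gcd_pos_of_pos_left t hp
  calc p ∣ m * t ↔ p / p.gcd t * p.gcd t ∣ m * (t / p.gcd t) * p.gcd t := by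
        rw [Nat.div_mul_cancel (Nat.gcd_dvd_left p t), mul_assoc,
          Nat.div_mul_cancel (Nat.gcd_dvd_right p t)]
    _ ↔ p / p.gcd t ∣ m * (t / p.gcd t) := Nat.mul_dvd_mul_iff_right hg
    _ ↔ p / p.gcd t ∣ m := (Nat.coprime_div_gcd_div_gcd hg).dvd_mul_right

lemma isLeast_dvd_mul {p : ℕ} (hp : 0 < p) (T : ℤ) :
    IsLeast {m : ℕ | 0 < m ∧ (p : ℤ) ∣ m * T} (p / p.gcd T.natAbs) := by
  have key (m : ℕ) : (p : ℤ) ∣ m * T ↔ p / p.gcd T.natAbs ∣ m := by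
    rw [Int.natCast_dvd, Int.natAbs_mul, Int.natAbs_natCast, dvd_mul_iff_div_gcd_dvd hp]
  refine ⟨⟨Nat.div_pos (Nat.gcd_le_left _ hp) (Nat.gcd_pos_of_pos_left _ hp), (key _).mpr dvd_rfl⟩,
    fun m ⟨hm, hdvd⟩ => Nat.le_of_dvd hm ((key m).mp hdvd)⟩

variable {n : ℕ} {c : ℕ → ℂ} {L : ℕ}
  (hL : IsLeast {M : ℕ | 0 < M ∧ ∀ i < n, ∃ z : ℤ, (M : ℂ) * c i = z} L)
include hL

lemma dvd_of_isLeast_intCast_mul {M : ℕ} (hM : ∀ i < n, ∃ z : ℤ, (M : ℂ) * c i = z) : L ∣ M := by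
  have hL0 := hL.1.1
  refine Nat.dvd_of_mod_eq_zero (Nat.eq_zero_of_not_pos fun hpos => ?_)
  refine (Nat.mod_lt M hL0).not_ge (hL.2 ⟨hpos, fun i hi => ?_⟩)
  obtain ⟨z, hz⟩ := hM i hi
  obtain ⟨y, hy⟩ := hL.1.2 i hi
  have hMq := Nat.div_add_mod M L
  generalize M / L = q at hMq
  refine ⟨z - q * y, ?_⟩
  have hdiv : ((M % L : ℕ) : ℂ) = M - L * q := by
    rw [eq_sub_iff_add_eq, add_comm]; exact_mod_cast hMq
  push_cast [hdiv]
  linear_combination hz - (q : ℂ) * hy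

theorem isLeast_div_gcd_mul {p : ℕ} (hp : 0 < p) (w : ℕ → ℤ) {T : ℤ}
    (hT : (T : ℂ) = ∑ i ∈ range n, (L : ℂ) * c i * w i) :
    IsLeast {N : ℕ | 0 < N ∧ ∃ e : ℕ → ℤ,
      (p : ℤ) ∣ ∑ i ∈ range n, e i * w i ∧ ∀ i < n, (e i : ℂ) = N * c i}
      (p / p.gcd T.natAbs * L) := by
  choose! Z hZ using hL.1.2
  have hT' (m : ℕ) : ∑ i ∈ range n, ((m : ℤ) * Z i) * w i = m * T := by
    have : ((∑ i ∈ range n, Z i * w i : ℤ) : ℂ) = T := by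
      push_cast; rw [hT]
      exact sum_congr rfl fun i hi => by rw [hZ i (mem_range.mp hi)]
    rw [← Int.cast_inj.mp this, mul_sum]
    exact sum_congr rfl fun i _ => by ring
  obtain ⟨⟨hk0, hkT⟩, hk⟩ := isLeast_dvd_mul hp T
  refine ⟨⟨Nat.mul_pos hk0 hL.1.1, fun i => _ * Z i, hT' _ ▸ hkT, fun i hi => ?_⟩, ?_⟩
  · rw [Int.cast_mul, Int.cast_natCast, ← hZ i hi, Nat.cast_mul, mul_assoc]
  rintro N ⟨hN, e, hdvd, he⟩
  obtain ⟨m, rfl⟩ := dvd_of_isLeast_intCast_mul hL fun i hi => ⟨e i, (he i hi).symm⟩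
  have hem : ∀ i ∈ range n, e i * w i = ((m : ℤ) * Z i) * w i := fun i hi => by
    have : (e i : ℂ) = ((m * Z i : ℤ) : ℂ) := by
      rw [he i (mem_range.mp hi), Int.cast_mul, Int.cast_natCast, ← hZ i (mem_range.mp hi),
        Nat.cast_mul]
      ring
    rw [Int.cast_inj.mp this]
  rw [sum_congr rfl hem, hT'] at hdvd
  rw [mul_comm L]
  exact Nat.mul_le_mul_right _ (hk ⟨Nat.pos_of_mul_pos_left hN, hdvd⟩)

end Lattice

/-- the `c_i` are rational; with `L` the least positive integer clearing their
denominators and `T = ∑ L·c_i·α^{2i}`, the number `N = (p/gcd(p,T))·L` is the least positive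
integer for which there are integers `e_0,…,e_{n−1}` with `p ∣ ∑ e_i α^{2i}` and
`∑_j e_j a_{(i+j) mod n} = N, −N, 0` according as `i = 0`, `i = n−1`, or otherwise.
(This `N` is the order of the class of `P_0 − P_{n−1}` in the rational cuspidal group.) -/
theorem statement17 (p n : ℕ) (hp : p.Prime) (hp5 : 5 ≤ p) (hn : n = (p - 1) / 2)
    (α : ℤ) (hα : orderOf (α : ZMod p) = p - 1)
    (ω : ℂ) (hω : IsPrimitiveRoot ω n) :
    (∀ i < n, ∃ q : ℚ, cC p n α ω i = (q : ℂ)) ∧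
    ∀ L : ℕ,
      (0 < L ∧ (∀ i < n, ∃ z : ℤ, (L : ℂ) * cC p n α ω i = (z : ℂ)) ∧
        ∀ L' : ℕ, 0 < L' → (∀ i < n, ∃ z : ℤ, (L' : ℂ) * cC p n α ω i = (z : ℂ)) → L ≤ L') →
      ∀ T : ℤ,
        (T : ℂ) = ∑ i ∈ Finset.range n, (L : ℂ) * cC p n α ω i * (α : ℂ) ^ (2 * i) →
        IsLeast
          {N : ℕ | 0 < N ∧ ∃ e : ℕ → ℤ,
            ((p : ℤ) ∣ ∑ i ∈ Finset.range n, e i * α ^ (2 * i)) ∧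
            ∀ i < n,
              (∑ j ∈ Finset.range n, (e j : ℂ) * aC p α ((i + j) % n)) =
                if i = 0 then (N : ℂ) else if i = n - 1 then -(N : ℂ) else 0}
          (p / Nat.gcd p T.natAbs * L) := by
  have : Fact p.Prime := ⟨hp⟩
  have hpn : p = 2 * n + 1 := by
    obtain ⟨k, hk⟩ := hp.odd_of_ne_two (by omega)
    omega
  have hα' : IsPrimitiveRoot (α : ZMod p) (p - 1) := hα ▸ IsPrimitiveRoot.orderOf _
  refine ⟨fun i hi => exists_ratCast_eq_cC hpn hα' hω hi, fun L hL T hT => ?_⟩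
  simp only [sum_mul_aC_eq_iff hpn hα' hω (by omega)]
  exact isLeast_div_gcd_mul ⟨⟨hL.1, hL.2.1⟩, fun M hM => hL.2.2 M hM.1 hM.2⟩ hp.pos
    (fun i => α ^ (2 * i)) (by push_cast; exact hT)

end SiegelPaper
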